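/- Assume additionally that for each user k the values A_{k,1},…,A_{k,M} are pairwise distinct. Let (v*, W*, λ*, t*, p*) be an optimal solution of problem P1. Then for every user k: t*_{k,m} ≠ 0 if m = argmax_{l ∈ {1,…,M}} v*_l·A_{k,l}, and t*_{k,m} = 0 for every other vertex m ≠ argmax_{l ∈ {1,…,M}} v*_l·A_{k,l}. -/
import Mathlib


/-- The objective of problem P1: weighted motion energy plus communication energy. -/
noncomputable def P1Objective (M K : ℕ) (D : Fin M → Fin M → ℝ) (a α₁ α₂ μ : ℝ)
    (W : Fin M → Fin M → ℝ) (t p : Fin K → Fin M → ℝ) : ℝ :=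
  μ * (α₁ / a + α₂) * (∑ m, ∑ j, D m j * W m j) +
    (2 - μ) * ∑ k, ∑ m, t k m * p k m

/-- Feasibility for problem P1. -/
def P1Feasible (M K : ℕ) (hM : 0 < M) (A : Fin K → Fin M → ℝ) (γ : Fin K → ℝ)
    (T : ℝ) (D : Fin M → Fin M → ℝ) (a J : ℝ)
    (v : Fin M → ℝ) (W : Fin M → Fin M → ℝ) (lam : Fin M → ℝ)
    (t p : Fin K → Fin M → ℝ) : Prop :=
  v ⟨0, hM⟩ = 1 ∧
  (∀ m, v m = 0 ∨ v m = 1) ∧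
  (∀ m j, W m j = 0 ∨ W m j = 1) ∧
  (∀ m, W m m = 0) ∧
  (∀ k m, 0 ≤ t k m) ∧
  (∀ k m, 0 ≤ p k m) ∧
  -- QoS constraint
  (∀ k, γ k ≤ ∑ m, t k m * Real.logb 2 (1 + v m * A k m * p k m)) ∧
  -- time-budget constraint
  ((∑ m, ∑ j, D m j * W m j) / a + (∑ k, ∑ m, t k m) ≤ T) ∧
  -- degree constraints
  (∀ m, ∑ j, W m j = v m) ∧
  (∀ m, ∑ j, W j m = v m) ∧
  -- subtour elimination constraints
  (∀ m j : Fin M, m ≠ j → m ≠ ⟨0, hM⟩ → j ≠ ⟨0, hM⟩ →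
    lam m - lam j + ((∑ l, v l) - 1) * W m j + ((∑ l, v l) - 3) * W j m ≤
      (∑ l, v l) - 2 + J * (2 - v m - v j)) ∧
  (∀ m : Fin M, m ≠ ⟨0, hM⟩ → v m ≤ lam m ∧ lam m ≤ ((∑ l, v l) - 1) * v m) ∧
  -- no-visit constraint
  (∀ k m, (1 - v m) * t k m = 0)



section AuxP1
open Real Finset

lemma two_rpow_eq (z : ℝ) : (2:ℝ) ^ z = Real.exp (z * Real.log 2) := by
  rw [Real.rpow_def_of_pos (by norm_num), mul_comm]

lemma exp_ratio_lt {x y : ℝ} (hx : 0 < x) (hxy : x < y) :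
    Real.exp x - 1 < (x / y) * (Real.exp y - 1) := by
  have hy : 0 < y := hx.trans hxy
  have hlam : (0:ℝ) < x / y := by positivity
  have hlam2 : x / y < 1 := (div_lt_one hy).2 hxy
  have h := strictConvexOn_exp.2 (Set.mem_univ (0:ℝ)) (Set.mem_univ y) (ne_of_lt hy)
    (show (0:ℝ) < 1 - x / y by linarith) hlam (by ring)
  simp only [smul_eq_mul, mul_zero, zero_add, Real.exp_zero, mul_one] at h
  have hxy' : x = x / y * y := by field_simp
  rw [← hxy'] at h
  have hexp : x / y * (Real.exp y - 1) = x / y * Real.exp y - x / y := by ring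
  linarith

lemma g_strict_anti {r s u : ℝ} (hr : 0 < r) (hs : 0 < s) (hsu : s < u) :
    u * ((2:ℝ) ^ (r / u) - 1) < s * ((2:ℝ) ^ (r / s) - 1) := by
  have hu : 0 < u := hs.trans hsu
  have h2 : (0:ℝ) < Real.log 2 := Real.log_pos (by norm_num)
  rw [two_rpow_eq, two_rpow_eq]
  have hx : 0 < r / u * Real.log 2 := by positivity
  have hxy : r / u * Real.log 2 < r / s * Real.log 2 := by
    have : r / u < r / s := div_lt_div_of_pos_left hr hs hsu
    nlinarith
  have h := exp_ratio_lt hx hxy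
  have hratio : (r / u * Real.log 2) / (r / s * Real.log 2) = s / u := by
    field_simp <;> ring
  rw [hratio] at h
  have := mul_lt_mul_of_pos_left h hu
  calc u * (Real.exp (r / u * Real.log 2) - 1)
      < u * (s / u * (Real.exp (r / s * Real.log 2) - 1)) := this
    _ = s * (Real.exp (r / s * Real.log 2) - 1) := by field_simp <;> ring

lemma g_subadd {τ₁ τ₂ r₁ r₂ : ℝ} (h1 : 0 < τ₁) (h2 : 0 < τ₂) :
    (τ₁ + τ₂) * ((2:ℝ) ^ ((r₁ + r₂) / (τ₁ + τ₂)) - 1) ≤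
      τ₁ * ((2:ℝ) ^ (r₁ / τ₁) - 1) + τ₂ * ((2:ℝ) ^ (r₂ / τ₂) - 1) := by
  have hτ : 0 < τ₁ + τ₂ := by linarith
  rw [two_rpow_eq, two_rpow_eq, two_rpow_eq]
  have h := convexOn_exp.2 (Set.mem_univ (r₁ / τ₁ * Real.log 2)) (Set.mem_univ (r₂ / τ₂ * Real.log 2))
    (show (0:ℝ) ≤ τ₁ / (τ₁ + τ₂) by positivity)
    (show (0:ℝ) ≤ τ₂ / (τ₁ + τ₂) by positivity)
    (show τ₁ / (τ₁ + τ₂) + τ₂ / (τ₁ + τ₂) = 1 by field_simp)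
  simp only [smul_eq_mul] at h
  have key : τ₁ / (τ₁ + τ₂) * (r₁ / τ₁ * Real.log 2) + τ₂ / (τ₁ + τ₂) * (r₂ / τ₂ * Real.log 2)
      = (r₁ + r₂) / (τ₁ + τ₂) * Real.log 2 := by field_simp <;> ring
  rw [key] at h
  have h' := mul_le_mul_of_nonneg_left h (le_of_lt hτ)
  have expand : (τ₁ + τ₂) * (τ₁ / (τ₁ + τ₂) * Real.exp (r₁ / τ₁ * Real.log 2) +
      τ₂ / (τ₁ + τ₂) * Real.exp (r₂ / τ₂ * Real.log 2))
      = τ₁ * Real.exp (r₁ / τ₁ * Real.log 2) + τ₂ * Real.exp (r₂ / τ₂ * Real.log 2) := by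
    field_simp <;> ring
  nlinarith [h']

lemma energy_lt (Am Al τ₁ τ₂ pm pl : ℝ) (hAm : 0 < Am) (hAl : 0 < Al)
    (hτ₁ : 0 < τ₁) (hτ₂ : 0 ≤ τ₂) (hpm : 0 ≤ pm) (hpl : 0 ≤ pl)
    (hcond : (0 < pm ∧ Am < Al) ∨ (pm = 0 ∧ 0 < τ₂ ∧ 0 < pl)) :
    (τ₁ + τ₂) *
      (((2:ℝ) ^ ((τ₁ * Real.logb 2 (1 + Am * pm) + τ₂ * Real.logb 2 (1 + Al * pl)) / (τ₁ + τ₂)) - 1) / Al)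
      < τ₁ * pm + τ₂ * pl := by
  set r₁ := τ₁ * Real.logb 2 (1 + Am * pm) with hr₁
  set r₂ := τ₂ * Real.logb 2 (1 + Al * pl) with hr₂
  have h1m : (0:ℝ) < 1 + Am * pm := by positivity
  have h1l : (0:ℝ) < 1 + Al * pl := by positivity
  have hd1 : r₁ / τ₁ = Real.logb 2 (1 + Am * pm) := by
    rw [hr₁]; field_simp
  have hrp1 : (2:ℝ) ^ (r₁ / τ₁) = 1 + Am * pm := by
    rw [hd1]; exact Real.rpow_logb (by norm_num) (by norm_num) h1m
  rcases hcond with ⟨hpm', hAml⟩ | ⟨hpm0, hτ₂', hpl'⟩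
  · -- case B : pm > 0 and Am < Al
    have hr₁pos : 0 < r₁ := by
      apply mul_pos hτ₁
      apply Real.logb_pos (by norm_num)
      nlinarith
    rcases eq_or_lt_of_le hτ₂ with h0 | hτ₂'
    · -- τ₂ = 0
      have hr₂0 : r₂ = 0 := by rw [hr₂, ← h0, zero_mul]
      rw [hr₂0, ← h0, add_zero, add_zero, zero_mul, add_zero, hrp1]
      have : τ₁ * ((1 + Am * pm - 1) / Al) = τ₁ * pm * (Am / Al) := by
        field_simp; ring
      rw [this]
      have h1 : Am / Al < 1 := (div_lt_one hAl).2 hAml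
      nlinarith [mul_pos hτ₁ hpm']
    · -- τ₂ > 0
      have hd2 : r₂ / τ₂ = Real.logb 2 (1 + Al * pl) := by
        rw [hr₂]; field_simp
      have hrp2 : (2:ℝ) ^ (r₂ / τ₂) = 1 + Al * pl := by
        rw [hd2]; exact Real.rpow_logb (by norm_num) (by norm_num) h1l
      have hsub := g_subadd (τ₁ := τ₁) (τ₂ := τ₂) (r₁ := r₁) (r₂ := r₂) hτ₁ hτ₂'
      rw [hrp1, hrp2] at hsub
      have hsub' : (τ₁ + τ₂) * ((2:ℝ) ^ ((r₁ + r₂) / (τ₁ + τ₂)) - 1) ≤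
          τ₁ * (Am * pm) + τ₂ * (Al * pl) := by
        calc (τ₁ + τ₂) * ((2:ℝ) ^ ((r₁ + r₂) / (τ₁ + τ₂)) - 1)
            ≤ τ₁ * (1 + Am * pm - 1) + τ₂ * (1 + Al * pl - 1) := hsub
          _ = τ₁ * (Am * pm) + τ₂ * (Al * pl) := by ring
      have hτpos : 0 < τ₁ + τ₂ := by linarith
      rw [mul_div_assoc'] -- (τ₁+τ₂)*(...) / Al
      rw [div_lt_iff₀ hAl]
      calc (τ₁ + τ₂) * ((2:ℝ) ^ ((r₁ + r₂) / (τ₁ + τ₂)) - 1)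
          ≤ τ₁ * (Am * pm) + τ₂ * (Al * pl) := hsub'
        _ < (τ₁ * pm + τ₂ * pl) * Al := by nlinarith [mul_pos hτ₁ hpm']
  · -- case A : pm = 0, τ₂ > 0, pl > 0
    have hr₁0 : r₁ = 0 := by
      rw [hr₁, hpm0, mul_zero, add_zero, Real.logb_one, mul_zero]
    have hr₂pos : 0 < r₂ := by
      apply mul_pos hτ₂'
      apply Real.logb_pos (by norm_num)
      nlinarith
    have hd2 : r₂ / τ₂ = Real.logb 2 (1 + Al * pl) := by
      rw [hr₂]; field_simp
    have hrp2 : (2:ℝ) ^ (r₂ / τ₂) = 1 + Al * pl := by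
      rw [hd2]; exact Real.rpow_logb (by norm_num) (by norm_num) h1l
    have hanti := g_strict_anti (r := r₂) (s := τ₂) (u := τ₁ + τ₂) hr₂pos hτ₂' (by linarith)
    rw [hrp2] at hanti
    rw [hr₁0, zero_add] at *
    rw [hpm0, mul_zero, zero_add]
    rw [mul_div_assoc', div_lt_iff₀ hAl]
    calc (τ₁ + τ₂) * ((2:ℝ) ^ (r₂ / (τ₁ + τ₂)) - 1)
        < τ₂ * (1 + Al * pl - 1) := hanti
      _ = τ₂ * pl * Al := by ring

lemma sum_split_two {ι : Type*} [Fintype ι] [DecidableEq ι] (f : ι → ℝ) {m l : ι} (h : m ≠ l) :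
    ∑ x, f x = f m + f l + ∑ x ∈ (Finset.univ.erase m).erase l, f x := by
  rw [← Finset.add_sum_erase _ f (Finset.mem_univ m),
    ← Finset.add_sum_erase _ f (Finset.mem_erase.2 ⟨h.symm, Finset.mem_univ l⟩)]
  ring


private lemma key_lemma (M K : ℕ) (hM : 2 ≤ M)
    (A : Fin K → Fin M → ℝ) (hA : ∀ k m, 0 < A k m)
    (γ : Fin K → ℝ)
    (T : ℝ) (D : Fin M → Fin M → ℝ) (a : ℝ) (α₁ α₂ μ : ℝ) (hμ₂ : μ ≤ 1) (J : ℝ)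
    (v : Fin M → ℝ) (W : Fin M → Fin M → ℝ) (lam : Fin M → ℝ)
    (t p : Fin K → Fin M → ℝ)
    (hfeas : P1Feasible M K (by omega) A γ T D a J v W lam t p)
    (hopt : ∀ (v' : Fin M → ℝ) (W' : Fin M → Fin M → ℝ) (lam' : Fin M → ℝ)
      (t' p' : Fin K → Fin M → ℝ),
      P1Feasible M K (by omega) A γ T D a J v' W' lam' t' p' →
      P1Objective M K D a α₁ α₂ μ W t p ≤ P1Objective M K D a α₁ α₂ μ W' t' p') :
    ∀ (k : Fin K) (m l : Fin M), m ≠ l → v m = 1 → v l = 1 → 0 < t k m →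
      ((0 < p k m ∧ A k m < A k l) ∨ (p k m = 0 ∧ 0 < t k l ∧ 0 < p k l)) → False := by
  obtain ⟨hv0, hv01, hW01, hWd, ht0, hp0, hQoS, hbudget, hdeg1, hdeg2, hsub, hlamc, hnov⟩ := hfeas
  intro k m l hml hvm hvl htm hcond
  set r : ℝ := t k m * Real.logb 2 (1 + A k m * p k m) + t k l * Real.logb 2 (1 + A k l * p k l)
    with hrdef
  set τ : ℝ := t k m + t k l with hτdef
  have hτpos : 0 < τ := by have := ht0 k l; rw [hτdef]; linarith
  set q : ℝ := ((2:ℝ) ^ (r / τ) - 1) / A k l with hqdef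
  have hr0 : 0 ≤ r := by
    have h1 : 0 ≤ Real.logb 2 (1 + A k m * p k m) := by
      apply Real.logb_nonneg (by norm_num)
      nlinarith [hA k m, hp0 k m]
    have h2 : 0 ≤ Real.logb 2 (1 + A k l * p k l) := by
      apply Real.logb_nonneg (by norm_num)
      nlinarith [hA k l, hp0 k l]
    have := ht0 k l
    positivity
  have hq0 : 0 ≤ q := by
    rw [hqdef]
    apply div_nonneg _ (hA k l).le
    have : (1:ℝ) ≤ (2:ℝ) ^ (r / τ) := Real.one_le_rpow (by norm_num) (by positivity)
    linarith
  have hAlq : 1 + A k l * q = (2:ℝ) ^ (r / τ) := by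
    rw [hqdef, mul_div_cancel₀ _ (ne_of_gt (hA k l))]
    ring
  have hlogq : Real.logb 2 (1 + A k l * q) = r / τ := by
    rw [hAlq]
    exact Real.logb_rpow (by norm_num) (by norm_num)
  classical
  set t' : Fin K → Fin M → ℝ := fun k' m' =>
    if k' = k then (if m' = m then 0 else if m' = l then τ else t k m') else t k' m' with ht'def
  set p' : Fin K → Fin M → ℝ := fun k' m' =>
    if k' = k then (if m' = m then 0 else if m' = l then q else p k m') else p k' m' with hp'def
  have ht'km : t' k m = 0 := by simp [ht'def]
  have ht'kl : t' k l = τ := by simp [ht'def, hml.symm]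
  have hp'km : p' k m = 0 := by simp [hp'def]
  have hp'kl : p' k l = q := by simp [hp'def, hml.symm]
  have ht'other : ∀ m', m' ≠ m → m' ≠ l → t' k m' = t k m' := by
    intro m' h1 h2; simp [ht'def, h1, h2]
  have hp'other : ∀ m', m' ≠ m → m' ≠ l → p' k m' = p k m' := by
    intro m' h1 h2; simp [hp'def, h1, h2]
  have ht'row : ∀ k', k' ≠ k → t' k' = t k' := by
    intro k' h; funext m'; simp [ht'def, h]
  have hp'row : ∀ k', k' ≠ k → p' k' = p k' := by
    intro k' h; funext m'; simp [hp'def, h]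
  -- new point is feasible
  have hfeas' : P1Feasible M K (by omega) A γ T D a J v W lam t' p' := by
    refine ⟨hv0, hv01, hW01, hWd, ?_, ?_, ?_, ?_, hdeg1, hdeg2, hsub, hlamc, ?_⟩
    · intro k' m'
      simp only [ht'def]
      split_ifs with h1 h2 h3
      · exact le_refl 0
      · exact hτpos.le
      · exact ht0 k m'
      · exact ht0 k' m'
    · intro k' m'
      simp only [hp'def]
      split_ifs with h1 h2 h3
      · exact le_refl 0
      · exact hq0
      · exact hp0 k m'
      · exact hp0 k' m'
    · -- QoS
      intro k'
      by_cases hk' : k' = k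
      · subst hk'
        have hτr : τ * (r / τ) = r := by field_simp
        have hnewsum :
            ∑ m', t' k' m' * Real.logb 2 (1 + v m' * A k' m' * p' k' m')
            = ∑ m', t k' m' * Real.logb 2 (1 + v m' * A k' m' * p k' m') := by
          rw [sum_split_two (fun m' => t' k' m' * Real.logb 2 (1 + v m' * A k' m' * p' k' m')) hml,
            sum_split_two (fun m' => t k' m' * Real.logb 2 (1 + v m' * A k' m' * p k' m')) hml]
          have htail : ∀ x ∈ (Finset.univ.erase m).erase l,
              t' k' x * Real.logb 2 (1 + v x * A k' x * p' k' x)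
              = t k' x * Real.logb 2 (1 + v x * A k' x * p k' x) := by
            intro x hx
            have hxl := (Finset.mem_erase.1 hx).1
            have hxm := (Finset.mem_erase.1 ((Finset.mem_erase.1 hx).2)).1
            rw [ht'other x hxm hxl, hp'other x hxm hxl]
          rw [Finset.sum_congr rfl htail]
          simp only [ht'km, ht'kl, hp'kl, hvm, hvl, zero_mul, one_mul, hlogq, hτr]
          rw [hrdef]
          ring
        rw [hnewsum]
        exact hQoS k'
      · have h1 := ht'row k' hk'
        have h2 := hp'row k' hk'
        rw [h1, h2]
        exact hQoS k'
    · -- budget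
      have hsum : (∑ k', ∑ m', t' k' m') = ∑ k', ∑ m', t k' m' := by
        apply Finset.sum_congr rfl
        intro k' _
        by_cases hk' : k' = k
        · subst hk'
          rw [sum_split_two (fun m' => t' k' m') hml, sum_split_two (fun m' => t k' m') hml]
          have htail : ∀ x ∈ (Finset.univ.erase m).erase l, t' k' x = t k' x := by
            intro x hx
            have hxl := (Finset.mem_erase.1 hx).1
            have hxm := (Finset.mem_erase.1 ((Finset.mem_erase.1 hx).2)).1
            exact ht'other x hxm hxl
          rw [Finset.sum_congr rfl htail, ht'km, ht'kl]
          ring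
        · rw [ht'row k' hk']
      rw [hsum]
      exact hbudget
    · -- no-visit
      intro k' m'
      simp only [ht'def]
      split_ifs with h1 h2 h3
      · ring
      · rw [h3, hvl]; ring
      · exact hnov k m'
      · exact hnov k' m'
  -- objective strictly decreases
  have henergy : τ * q < t k m * p k m + t k l * p k l := by
    have := energy_lt (A k m) (A k l) (t k m) (t k l) (p k m) (p k l)
      (hA k m) (hA k l) htm (ht0 k l) (hp0 k m) (hp0 k l) hcond
    rw [← hrdef, ← hτdef, ← hqdef] at this
    exact this
  have hrowlt : ∑ k', ∑ m', t' k' m' * p' k' m' < ∑ k', ∑ m', t k' m' * p k' m' := by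
    apply Finset.sum_lt_sum
    · intro k' _
      by_cases hk' : k' = k
      · subst hk'
        rw [sum_split_two (fun m' => t' k' m' * p' k' m') hml,
          sum_split_two (fun m' => t k' m' * p k' m') hml]
        have htail : ∀ x ∈ (Finset.univ.erase m).erase l, t' k' x * p' k' x = t k' x * p k' x := by
          intro x hx
          have hxl := (Finset.mem_erase.1 hx).1
          have hxm := (Finset.mem_erase.1 ((Finset.mem_erase.1 hx).2)).1
          rw [ht'other x hxm hxl, hp'other x hxm hxl]
        rw [Finset.sum_congr rfl htail, ht'km, ht'kl, hp'km, hp'kl]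
        nlinarith [henergy]
      · rw [ht'row k' hk', hp'row k' hk']
    · refine ⟨k, Finset.mem_univ k, ?_⟩
      rw [sum_split_two (fun m' => t' k m' * p' k m') hml,
        sum_split_two (fun m' => t k m' * p k m') hml]
      have htail : ∀ x ∈ (Finset.univ.erase m).erase l, t' k x * p' k x = t k x * p k x := by
        intro x hx
        have hxl := (Finset.mem_erase.1 hx).1
        have hxm := (Finset.mem_erase.1 ((Finset.mem_erase.1 hx).2)).1
        rw [ht'other x hxm hxl, hp'other x hxm hxl]
      rw [Finset.sum_congr rfl htail, ht'km, ht'kl, hp'km, hp'kl]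
      nlinarith [henergy]
  have hobj := hopt v W lam t' p' hfeas'
  unfold P1Objective at hobj
  have h2μ : (0:ℝ) < 2 - μ := by linarith
  nlinarith [mul_lt_mul_of_pos_left hrowlt h2μ]

end AuxP1

/-- Proposition 1 (i): at an optimal solution of P1 (with pairwise-distinct channel
gains `A k ·` for each user), the time allocated to user `k` is nonzero exactly at the
vertex `m` maximizing `v l * A k l` (i.e. the unique strict argmax), and zero at every
other vertex. -/
theorem stmt_1 (M K : ℕ) (hM : 2 ≤ M) (hK : 1 ≤ K)
    (A : Fin K → Fin M → ℝ) (hA : ∀ k m, 0 < A k m)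
    (hdistinct : ∀ k : Fin K, Function.Injective (A k))
    (γ : Fin K → ℝ) (hγ : ∀ k, 0 < γ k)
    (T : ℝ) (hT : 0 < T)
    (D : Fin M → Fin M → ℝ) (hD : ∀ m j, 0 ≤ D m j)
    (a : ℝ) (ha : 0 < a)
    (α₁ α₂ : ℝ) (hα₁ : 0 ≤ α₁) (hα₂ : 0 ≤ α₂)
    (μ : ℝ) (hμ₁ : 0 < μ) (hμ₂ : μ ≤ 1)
    (J : ℝ) (hJ : 0 < J)
    (v : Fin M → ℝ) (W : Fin M → Fin M → ℝ) (lam : Fin M → ℝ)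
    (t p : Fin K → Fin M → ℝ)
    (hfeas : P1Feasible M K (by omega) A γ T D a J v W lam t p)
    (hopt : ∀ (v' : Fin M → ℝ) (W' : Fin M → Fin M → ℝ) (lam' : Fin M → ℝ)
      (t' p' : Fin K → Fin M → ℝ),
      P1Feasible M K (by omega) A γ T D a J v' W' lam' t' p' →
      P1Objective M K D a α₁ α₂ μ W t p ≤ P1Objective M K D a α₁ α₂ μ W' t' p') :
    ∀ (k : Fin K) (m : Fin M),
      ((∀ l : Fin M, l ≠ m → v l * A k l < v m * A k m) → t k m ≠ 0) ∧
      ((¬ ∀ l : Fin M, l ≠ m → v l * A k l < v m * A k m) → t k m = 0) := by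
  have hfeas' := hfeas
  have key := key_lemma M K hM A hA γ T D a α₁ α₂ μ hμ₂ J v W lam t p hfeas' hopt
  obtain ⟨-, hv01, -, -, ht0, hp0, hQoS, -, -, -, -, -, hnov⟩ := hfeas
  -- part 2 first
  have part2 : ∀ (k : Fin K) (m : Fin M),
      (¬ ∀ l : Fin M, l ≠ m → v l * A k l < v m * A k m) → t k m = 0 := by
    intro k m hnS
    by_contra h0
    have htm : 0 < t k m := lt_of_le_of_ne (ht0 k m) (Ne.symm h0)
    -- v m must be 1
    rcases hv01 m with hvm | hvm
    · have := hnov k m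
      rw [hvm] at this
      simp at this
      exact h0 this
    push_neg at hnS
    obtain ⟨l, hlm, hge⟩ := hnS
    -- v l = 1 and A k m < A k l
    rcases hv01 l with hvl | hvl
    · rw [hvl, zero_mul, hvm, one_mul] at hge
      exact absurd hge (not_le.2 (hA k m))
    rw [hvl, one_mul, hvm, one_mul] at hge
    have hAlt : A k m < A k l :=
      lt_of_le_of_ne hge (fun h => hlm (hdistinct k h.symm))
    rcases eq_or_lt_of_le (hp0 k m) with hpm0 | hpmpos
    · -- p k m = 0 : find a vertex with positive rate
      have hex : ∃ l₀ : Fin M, 0 < t k l₀ * Real.logb 2 (1 + v l₀ * A k l₀ * p k l₀) := by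
        by_contra hall
        push_neg at hall
        have : ∑ m', t k m' * Real.logb 2 (1 + v m' * A k m' * p k m') ≤ 0 :=
          Finset.sum_nonpos (fun i _ => hall i)
        linarith [hQoS k, hγ k]
      obtain ⟨l₀, hl₀⟩ := hex
      have htl₀ : 0 < t k l₀ := by
        rcases mul_pos_iff.1 hl₀ with ⟨h1, _⟩ | ⟨h1, _⟩
        · exact h1
        · exact absurd h1 (not_lt.2 (ht0 k l₀))
      have hlog₀ : 0 < Real.logb 2 (1 + v l₀ * A k l₀ * p k l₀) := by
        rcases mul_pos_iff.1 hl₀ with ⟨_, h2⟩ | ⟨h1, _⟩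
        · exact h2
        · exact absurd h1 (not_lt.2 (ht0 k l₀))
      have hvAp : 0 < v l₀ * A k l₀ * p k l₀ := by
        by_contra hc
        push_neg at hc
        have h1 : 1 + v l₀ * A k l₀ * p k l₀ ≤ 1 := by linarith
        have hge0 : 0 ≤ v l₀ * A k l₀ * p k l₀ := by
          rcases hv01 l₀ with h | h <;> rw [h]
          · simp
          · rw [one_mul]; exact mul_nonneg (hA k l₀).le (hp0 k l₀)
        have := Real.logb_nonpos (b := 2) (by norm_num) (by linarith) h1
        linarith
      have hvl₀ : v l₀ = 1 := by
        rcases hv01 l₀ with h | h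
        · rw [h, zero_mul, zero_mul] at hvAp; linarith
        · exact h
      have hpl₀ : 0 < p k l₀ := by
        rcases lt_or_ge 0 (p k l₀) with h | h
        · exact h
        · have : p k l₀ = 0 := le_antisymm h (hp0 k l₀)
          rw [this, mul_zero] at hvAp; linarith
      have hml₀ : m ≠ l₀ := by
        intro h
        rw [← h, hvm, one_mul, ← hpm0, mul_zero] at hvAp
        linarith
      exact key k m l₀ hml₀ hvm hvl₀ htm (Or.inr ⟨hpm0.symm, htl₀, hpl₀⟩)
    · exact key k m l (Ne.symm hlm) hvm hvl htm (Or.inl ⟨hpmpos, hAlt⟩)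
  intro k m
  refine ⟨?_, part2 k m⟩
  intro hS h0
  have hz : ∀ l, l ≠ m → t k l = 0 := by
    intro l hl
    apply part2 k l
    intro hall
    have h1 := hall m (Ne.symm hl)
    have h2 := hS l hl
    linarith
  have hsum : ∑ m', t k m' * Real.logb 2 (1 + v m' * A k m' * p k m')
      = t k m * Real.logb 2 (1 + v m * A k m * p k m) := by
    apply Finset.sum_eq_single
    · intro l _ hl
      rw [hz l hl, zero_mul]
    · intro h
      exact absurd (Finset.mem_univ m) h
  have := hQoS k
  rw [hsum, h0, zero_mul] at this
  linarith [hγ k]
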